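/- In the type (ii) algebra A, a ℂ-linear map D : A → A is a derivation (i.e. D(uv) = D(u)v + uD(v) for all u, v ∈ A) if and only if there exist α₂, α₃ ∈ ℂ such that D(a) = α₂a² + α₃a³, D(a²) = (α₂ + α₃)a³, and D(a³) = (α₂ + α₃)a³. The inner derivations (maps of the form t ↦ x·t for some x ∈ A) are exactly those with α₃ = 0. -/
import Mathlib


/-- `lpow μ x k` is the left-normed power `x^(k+1)`; so `lpow μ x 0 = x`,
`lpow μ x 1 = x·x = x²`, `lpow μ x 2 = x·x² = x³`, etc. -/
def lpow {A : Type*} [AddCommGroup A] [Module ℂ A]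
    (μ : A →ₗ[ℂ] A →ₗ[ℂ] A) (x : A) : ℕ → A
  | 0 => x
  | n + 1 => μ x (lpow μ x n)
/-- The 3-dimensional cyclic Leibniz algebra of type (ii): A = ℂ³ with basis
a = e₀, a² = e₁, a³ = e₂ and multiplication u·v = u₀ • L_a(v), where
L_a(a) = a², L_a(a²) = a³, L_a(a³) = a³ (so a²·v = a³·v = 0). -/
noncomputable def mulII : (Fin 3 → ℂ) →ₗ[ℂ] (Fin 3 → ℂ) →ₗ[ℂ] (Fin 3 → ℂ) :=
  (LinearMap.proj 0).smulRight (Matrix.mulVecLin !![0,0,0;1,0,0;0,1,1])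

noncomputable def a : Fin 3 → ℂ := ![1,0,0]
noncomputable def a2 : Fin 3 → ℂ := ![0,1,0]
noncomputable def a3 : Fin 3 → ℂ := ![0,0,1]
@[simp] lemma a_v0 : a 0 = 1 := rfl
@[simp] lemma a_v1 : a 1 = 0 := rfl
@[simp] lemma a_v2 : a 2 = 0 := rfl
@[simp] lemma a2_v0 : a2 0 = 0 := rfl
@[simp] lemma a2_v1 : a2 1 = 1 := rfl
@[simp] lemma a2_v2 : a2 2 = 0 := rfl
@[simp] lemma a3_v0 : a3 0 = 0 := rfl
@[simp] lemma a3_v1 : a3 1 = 0 := rfl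
@[simp] lemma a3_v2 : a3 2 = 1 := rfl

lemma mulII_apply (u v : Fin 3 → ℂ) : mulII u v = u 0 • ![0, v 0, v 1 + v 2] := by
  funext i
  fin_cases i <;>
    simp [mulII, Matrix.mulVecLin, Matrix.mulVec, dotProduct, Fin.sum_univ_three]

lemma decomp (u : Fin 3 → ℂ) : u = u 0 • a + u 1 • a2 + u 2 • a3 := by
  funext i; fin_cases i <;> simp

lemma D_apply (D : (Fin 3 → ℂ) →ₗ[ℂ] (Fin 3 → ℂ)) (u : Fin 3 → ℂ) :
    D u = u 0 • D a + u 1 • D a2 + u 2 • D a3 := by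
  conv_lhs => rw [decomp u]
  simp

lemma maa : mulII a a = a2 := by
  rw [mulII_apply]; funext i; fin_cases i <;> simp

lemma maa2 : mulII a a2 = a3 := by
  rw [mulII_apply]; funext i; fin_cases i <;> simp

lemma maa3 : mulII a a3 = a3 := by
  rw [mulII_apply]; funext i; fin_cases i <;> simp


/-- In the type (ii) algebra, a linear map D is a derivation iff there
are α₂, α₃ ∈ ℂ with D(a) = α₂a² + α₃a³, D(a²) = (α₂ + α₃)a³, D(a³) = (α₂ + α₃)a³;
the inner derivations (t ↦ x·t for some x) are exactly those with α₃ = 0. -/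
theorem typeII_derivations :
    (∀ D : (Fin 3 → ℂ) →ₗ[ℂ] (Fin 3 → ℂ),
      ((∀ u v : Fin 3 → ℂ, D (mulII u v) = mulII (D u) v + mulII u (D v)) ↔
        ∃ α₂ α₃ : ℂ, D a = α₂ • a2 + α₃ • a3 ∧
          D a2 = (α₂ + α₃) • a3 ∧ D a3 = (α₂ + α₃) • a3)) ∧
    (∀ D : (Fin 3 → ℂ) →ₗ[ℂ] (Fin 3 → ℂ),
      (∀ u v : Fin 3 → ℂ, D (mulII u v) = mulII (D u) v + mulII u (D v)) →
      ((∃ x : Fin 3 → ℂ, ∀ t : Fin 3 → ℂ, D t = mulII x t) ↔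
        ∃ α₂ : ℂ, D a = α₂ • a2 ∧ D a2 = α₂ • a3 ∧ D a3 = α₂ • a3)) := by
  constructor
  · intro D
    constructor
    · intro h
      have h1 := h a a
      have h2 := h a a2
      have h3 := h a a3
      rw [maa, mulII_apply, mulII_apply] at h1
      rw [maa2, mulII_apply, mulII_apply] at h2
      rw [maa3, mulII_apply, mulII_apply] at h3
      have e10 := congrFun h1 0
      have e11 := congrFun h1 1
      have e12 := congrFun h1 2
      have e20 := congrFun h2 0
      have e21 := congrFun h2 1
      have e22 := congrFun h2 2
      have e30 := congrFun h3 0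
      have e31 := congrFun h3 1
      have e32 := congrFun h3 2
      simp at e10 e11 e12 e20 e21 e22 e30 e31 e32
      have k0 : D a 0 = 0 := by linear_combination -e32 - e31 - e30
      refine ⟨D a 1, D a 2, ?_, ?_, ?_⟩ <;> funext i <;> fin_cases i <;> simp
      · exact k0
      · exact e10
      · linear_combination e11 + 2 * k0
      · exact e12
      · exact e30
      · linear_combination e31 + e30
      · linear_combination e22 + e11 + e12 + 3 * k0
    · rintro ⟨α₂, α₃, h1, h2, h3⟩ u v
      have hD : ∀ w : Fin 3 → ℂ,
          D w = ![0, α₂ * w 0, α₃ * w 0 + (α₂ + α₃) * (w 1 + w 2)] := by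
        intro w
        rw [D_apply, h1, h2, h3]
        funext i
        fin_cases i <;> simp <;> ring
      rw [mulII_apply u v, map_smul, hD, hD u, hD v, mulII_apply, mulII_apply]
      funext i
      fin_cases i <;>
        simp only [Pi.add_apply, Pi.smul_apply, smul_eq_mul, Matrix.cons_val_zero,
          Matrix.cons_val_one, Matrix.head_cons, Matrix.cons_val_two, Matrix.tail_cons] <;>
        ring
  · intro D _
    constructor
    · rintro ⟨x, hx⟩
      refine ⟨x 0, ?_, ?_, ?_⟩ <;>
        · rw [hx, mulII_apply]
          funext i
          fin_cases i <;> simp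
    · rintro ⟨α₂, h1, h2, h3⟩
      refine ⟨![α₂, 0, 0], fun t => ?_⟩
      rw [D_apply, h1, h2, h3, mulII_apply]
      funext i
      fin_cases i <;> simp <;> ring
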